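/- Consider the OCO with ρ-discounted infinite memory instance (ρ ∈ (0,1)) with the 2-norm, built over a nonempty closed convex subset 𝒳 of a real Hilbert space 𝒲. Let f_1, …, f_T : ℋ → ℝ be L-Lipschitz continuous with each f̄_t convex and L̄-Lipschitz continuous, let R : 𝒳 → ℝ be α-strongly convex with |R(x) − R(x̃)| ≤ D for all x, x̃ ∈ 𝒳, and let the x_t be FTRL iterates with a suitable step size η > 0. Then there are absolute constants C, C' > 0 such that the policy regret satisfies Σ_{t=1}^{T} f_t(h_t) − inf_{x ∈ 𝒳} Σ_{t=1}^{T} f̄_t(x) ≤ C √((D/α) T L L̄ (1−ρ²)^{−3/2}) ≤ C' √((D/α) T L² (1−ρ)^{−2}). -/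

import Mathlib

/-!
FTRL on the unary losses `f̄ t` minimizes `α / η`-strongly convex objectives, so quadratic growth
around consecutive minimizers makes consecutive iterates `2 η K / α`-close, `K` a Lipschitz
constant of the `f̄ t`; with the be-the-leader inequality the FTRL regret on the `f̄ t` is at most
`T K (2 η K / α) + D / η`. The history `h t` differs from the history of the constant decision
`x t` by `∑ k, A^k B (x (t - k) - x t)`, whose `ℓ²` norm is at most
`(2 η K / α) (∑ k, k² ρ^(2k))^(1/2) ≤ (2 η K / α) √2 (1 - ρ²)^(-3/2)`, and the `L`-Lipschitz
`f t` pay `L` times this per round. The total has the form `η M + D / η`, balanced by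
`η = √(D / M)`.
-/

open Finset

theorem sum_range_sq_mul_pow_le {q : ℝ} (hq₀ : 0 ≤ q) (hq₁ : q < 1) (t : ℕ) :
    ∑ i ∈ range t, (i : ℝ) ^ 2 * q ^ i ≤ 2 / (1 - q) ^ 3 := by
  have hq : ‖q‖ < 1 := by rwa [Real.norm_of_nonneg hq₀]
  have hchoose := (hasSum_choose_mul_geometric_of_norm_lt_one 2 hq).mul_left 2
  -- `i ^ 2 ≤ (i + 2) (i + 1) = 2 * (i + 2).choose 2`
  have hle (i : ℕ) : (i : ℝ) ^ 2 * q ^ i ≤ 2 * ((i + 2).choose 2 * q ^ i) := by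
    have h := Nat.add_one_mul_choose_eq (i + 1) 1
    rw [Nat.choose_one_right] at h
    have h' : ((i + 2 : ℕ) : ℝ) * (i + 1 : ℕ) = (i + 2).choose 2 * 2 := by exact_mod_cast h
    push_cast at h'
    rw [← mul_assoc]
    gcongr
    nlinarith
  calc ∑ i ∈ range t, (i : ℝ) ^ 2 * q ^ i
      ≤ ∑' i : ℕ, 2 * ((i + 2).choose 2 * q ^ i) :=
        (sum_le_sum fun i _ => hle i).trans <|
          hchoose.summable.sum_le_tsum _ fun i _ => by positivity
    _ = 2 / (1 - q) ^ 3 := by rw [hchoose.tsum_eq]; ring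

theorem sq_rpow_neg_div_two {u : ℝ} (hu : 0 ≤ u) (n : ℕ) :
    (u ^ (-(n : ℝ) / 2)) ^ 2 = (u ^ n)⁻¹ := by
  rw [← Real.rpow_natCast _ 2, ← Real.rpow_mul hu, ← Real.rpow_natCast u n, ← Real.rpow_neg hu]
  norm_num

theorem sqrt_div_mul_add_div_sqrt_div {D M : ℝ} (hD : 0 < D) (hM : 0 < M) :
    √(D / M) * M + D / √(D / M) = 2 * √(D * M) := by
  have hM' : 0 < √M := Real.sqrt_pos.mpr hM
  have hD' : 0 < √D := Real.sqrt_pos.mpr hD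
  rw [Real.sqrt_div hD.le, Real.sqrt_mul hD.le]
  field_simp
  rw [Real.sq_sqrt hM.le, Real.sq_sqrt hD.le]
  ring

theorem mul_mul_mul_rpow_le_mul_sq_mul_inv_sq {ρ P L Lbar : ℝ} (hρ₀ : 0 ≤ ρ) (hρ₁ : ρ < 1)
    (hP : 0 ≤ P) (hL : 0 ≤ L) (hLbar : Lbar ≤ L * (1 - ρ ^ 2) ^ (-(1 : ℝ) / 2)) :
    P * L * Lbar * (1 - ρ ^ 2) ^ (-(3 : ℝ) / 2) ≤ P * L ^ 2 * ((1 - ρ)⁻¹) ^ 2 := by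
  have hu : 0 < 1 - ρ ^ 2 := by nlinarith
  set c := (1 - ρ ^ 2) ^ (-(1 : ℝ) / 2)
  have hc₂ : c ^ 2 = (1 - ρ ^ 2)⁻¹ := by simpa using sq_rpow_neg_div_two hu.le 1
  have hc₃ : (1 - ρ ^ 2) ^ (-(3 : ℝ) / 2) = c ^ 3 := by
    rw [← Real.rpow_natCast c 3, ← Real.rpow_mul hu.le]
    norm_num
  calc P * L * Lbar * (1 - ρ ^ 2) ^ (-(3 : ℝ) / 2) ≤ P * L * (L * c) * c ^ 3 := by
        rw [hc₃]; gcongr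
    _ = P * L ^ 2 * (c ^ 2) ^ 2 := by ring
    _ ≤ P * L ^ 2 * ((1 - ρ)⁻¹) ^ 2 := by
        rw [hc₂]
        gcongr
        nlinarith

theorem min_mul_add_min_le {a b : ℝ} (ha : 0 ≤ a) (hb : 0 ≤ b) :
    min a b * (√2 * b + min a b) ≤ (√2 + 1) * (a * b) := by
  calc min a b * (√2 * b + min a b) = √2 * (min a b * b) + min a b * min a b := by ring
    _ ≤ √2 * (a * b) + a * b := by
        gcongr
        exacts [min_le_left a b, min_le_left a b, min_le_right a b]
    _ = (√2 + 1) * (a * b) := by ring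

theorem norm_sub_le_mul_of_norm_sub_succ_le {E : Type*} [SeminormedAddCommGroup E] {x : ℕ → E}
    {σ : ℝ} {m n : ℕ} (hmn : m ≤ n) (hstep : ∀ j, m ≤ j → j < n → ‖x j - x (j + 1)‖ ≤ σ) :
    ‖x m - x n‖ ≤ (n - m : ℕ) * σ := by
  rw [← dist_eq_norm, ← Nat.card_Ico, ← nsmul_eq_mul]
  refine (dist_le_Ico_sum_dist x hmn).trans (sum_le_card_nsmul _ _ _ fun j hj => ?_)
  rw [dist_eq_norm]
  exact hstep j (mem_Ico.mp hj).1 (mem_Ico.mp hj).2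

section StrongConvexity

variable {E : Type*} [NormedAddCommGroup E] [NormedSpace ℝ E] {s : Set E} {m : ℝ} {f g : E → ℝ}

theorem StrongConvexOn.add_convexOn (hf : StrongConvexOn s m f) (hg : ConvexOn ℝ s g) :
    StrongConvexOn s m (f + g) := by
  simpa [StrongConvexOn] using UniformConvexOn.add hf hg.uniformConvexOn_zero

theorem StrongConvexOn.div_const (hf : StrongConvexOn s m f) {c : ℝ} (hc : 0 < c) :
    StrongConvexOn s (m / c) fun x => f x / c := by
  refine ⟨hf.1, fun x hx y hy a b ha hb hab => ?_⟩
  have h := div_le_div_of_nonneg_right (hf.2 hx hy ha hb hab) hc.le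
  simp only [smul_eq_mul] at h ⊢
  exact h.trans_eq (by ring)

-- Only the midpoint inequality is used, hence `m / 4` rather than the sharp `m / 2`.
theorem StrongConvexOn.sq_norm_sub_le_of_isMinOn {x y : E} (hf : StrongConvexOn s m f)
    (hmin : IsMinOn f s x) (hx : x ∈ s) (hy : y ∈ s) :
    m / 4 * ‖y - x‖ ^ 2 ≤ f y - f x := by
  have hmid := hf.2 hx hy (by norm_num : (0 : ℝ) ≤ 1 / 2) (by norm_num : (0 : ℝ) ≤ 1 / 2)
    (by norm_num)
  have hxmid := isMinOn_iff.mp hmin _ (hf.1 hx hy (by norm_num : (0 : ℝ) ≤ 1 / 2)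
    (by norm_num : (0 : ℝ) ≤ 1 / 2) (by norm_num))
  rw [norm_sub_rev] at hmid
  simp only [smul_eq_mul] at hmid
  linarith

theorem StrongConvexOn.sq_norm_sub_le_of_isMinOn_add {x x' : E} (hf : StrongConvexOn s m f)
    (hg : ConvexOn ℝ s g) (hx : x ∈ s) (hx' : x' ∈ s) (hmin : IsMinOn f s x)
    (hmin' : IsMinOn (f + g) s x') :
    m / 2 * ‖x - x'‖ ^ 2 ≤ g x - g x' := by
  have h := hf.sq_norm_sub_le_of_isMinOn hmin hx hx'
  have h' := (hf.add_convexOn hg).sq_norm_sub_le_of_isMinOn hmin' hx' hx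
  rw [norm_sub_rev] at h
  simp only [Pi.add_apply] at h'
  linarith

end StrongConvexity

section FTRL

variable {E : Type*} {s : Set E} {φ : ℕ → E → ℝ} {R : E → ℝ} {η α K D : ℝ} {T : ℕ} {x : ℕ → E}

noncomputable def ftrlObjective (φ : ℕ → E → ℝ) (R : E → ℝ) (η : ℝ) (n : ℕ) (z : E) : ℝ :=
  ∑ t ∈ Icc 1 n, φ t z + R z / η

/-- `x (n + 1)` is the FTRL decision after the losses `φ 1, …, φ n` have been observed. -/
def IsFTRLIterates (s : Set E) (φ : ℕ → E → ℝ) (R : E → ℝ) (η : ℝ) (T : ℕ) (x : ℕ → E) :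
    Prop :=
  ∀ n ≤ T, x (n + 1) ∈ s ∧ IsMinOn (ftrlObjective φ R η n) s (x (n + 1))

theorem ftrlObjective_succ (n : ℕ) :
    ftrlObjective φ R η (n + 1) = ftrlObjective φ R η n + φ (n + 1) := by
  funext z
  simp only [ftrlObjective, Pi.add_apply, sum_Icc_succ_top (Nat.le_add_left 1 n)]
  ring

theorem IsFTRLIterates.mem (hx : IsFTRLIterates s φ R η T x) {t : ℕ} (ht₁ : 1 ≤ t)
    (ht : t ≤ T + 1) : x t ∈ s := by
  obtain ⟨n, rfl⟩ : ∃ n, t = n + 1 := ⟨t - 1, by omega⟩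
  exact (hx n (by omega)).1

theorem IsFTRLIterates.sum_le_ftrlObjective (hx : IsFTRLIterates s φ R η T x) {n : ℕ}
    (hn : n ≤ T) {y : E} (hy : y ∈ s) :
    ∑ t ∈ Icc 1 n, φ t (x (t + 1)) + R (x 1) / η ≤ ftrlObjective φ R η n y := by
  induction n generalizing y with
  | zero => simpa [ftrlObjective] using isMinOn_iff.mp (hx 0 (Nat.zero_le _)).2 y hy
  | succ n ih =>
    obtain ⟨hxs, hmin⟩ := hx (n + 1) hn
    have hprev := ih (by omega) hxs
    have hcur := isMinOn_iff.mp hmin y hy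
    rw [sum_Icc_succ_top (Nat.le_add_left 1 n), ftrlObjective_succ, Pi.add_apply]
    rw [ftrlObjective_succ, Pi.add_apply, Pi.add_apply] at hcur
    linarith

variable [NormedAddCommGroup E] [NormedSpace ℝ E]

theorem strongConvexOn_ftrlObjective (hη : 0 < η) (hR : StrongConvexOn s α R)
    (hφ : ∀ t, 1 ≤ t → t ≤ T → ConvexOn ℝ s (φ t)) {n : ℕ} (hn : n ≤ T) :
    StrongConvexOn s (α / η) (ftrlObjective φ R η n) := by
  induction n with
  | zero =>
    convert hR.div_const hη using 1
    funext z
    simp [ftrlObjective]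
  | succ n ih =>
    rw [ftrlObjective_succ]
    exact (ih (by omega)).add_convexOn (hφ _ (by omega) hn)

theorem IsFTRLIterates.norm_sub_succ_le (hx : IsFTRLIterates s φ R η T x) (hη : 0 < η)
    (hα : 0 < α) (hK : 0 ≤ K) (hR : StrongConvexOn s α R)
    (hφ : ∀ t, 1 ≤ t → t ≤ T → ConvexOn ℝ s (φ t))
    (hlip : ∀ t, 1 ≤ t → t ≤ T → ∀ a ∈ s, ∀ b ∈ s, |φ t a - φ t b| ≤ K * ‖a - b‖)
    {t : ℕ} (ht₁ : 1 ≤ t) (ht : t ≤ T) :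
    ‖x t - x (t + 1)‖ ≤ 2 * η * K / α := by
  obtain ⟨n, rfl⟩ : ∃ n, t = n + 1 := ⟨t - 1, by omega⟩
  obtain ⟨hxs, hmin⟩ := hx n (by omega)
  obtain ⟨hxs', hmin'⟩ := hx (n + 1) ht
  rw [ftrlObjective_succ] at hmin'
  have hgrowth := (strongConvexOn_ftrlObjective hη hR hφ (by omega : n ≤ T))
    |>.sq_norm_sub_le_of_isMinOn_add (hφ _ ht₁ ht) hxs hxs' hmin hmin'
  have hquad := hgrowth.trans <| (le_abs_self _).trans (hlip _ ht₁ ht _ hxs _ hxs')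
  rw [div_div, div_mul_eq_mul_div, div_le_iff₀ (by positivity)] at hquad
  rw [le_div_iff₀ hα]
  rcases (norm_nonneg (x (n + 1) - x (n + 1 + 1))).eq_or_lt with hd | hd
  · rw [← hd, zero_mul]; positivity
  · nlinarith

theorem IsFTRLIterates.regret_le (hx : IsFTRLIterates s φ R η T x) (hη : 0 < η)
    (hα : 0 < α) (hK : 0 ≤ K) (hR : StrongConvexOn s α R)
    (hφ : ∀ t, 1 ≤ t → t ≤ T → ConvexOn ℝ s (φ t))
    (hlip : ∀ t, 1 ≤ t → t ≤ T → ∀ a ∈ s, ∀ b ∈ s, |φ t a - φ t b| ≤ K * ‖a - b‖)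
    (hosc : ∀ a ∈ s, ∀ b ∈ s, |R a - R b| ≤ D) {y : E} (hy : y ∈ s) :
    ∑ t ∈ Icc 1 T, φ t (x t) - ∑ t ∈ Icc 1 T, φ t y ≤ T * (K * (2 * η * K / α)) + D / η := by
  have hstep : ∀ t ∈ Icc 1 T, φ t (x t) - φ t (x (t + 1)) ≤ K * (2 * η * K / α) := by
    intro t ht
    obtain ⟨ht₁, ht⟩ := mem_Icc.mp ht
    calc φ t (x t) - φ t (x (t + 1)) ≤ K * ‖x t - x (t + 1)‖ :=
          (le_abs_self _).trans <| hlip t ht₁ ht _ (hx.mem ht₁ (by omega)) _ (hx t ht).1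
      _ ≤ K * (2 * η * K / α) := by
          gcongr; exact hx.norm_sub_succ_le hη hα hK hR hφ hlip ht₁ ht
  have hstable := sum_le_card_nsmul _ _ _ hstep
  rw [sum_sub_distrib, Nat.card_Icc, Nat.add_sub_cancel, nsmul_eq_mul] at hstable
  have hleader := hx.sum_le_ftrlObjective le_rfl hy
  have hR₁ : (R y - R (x 1)) / η ≤ D / η := by
    gcongr
    exact (le_abs_self _).trans (hosc _ hy _ (hx.mem le_rfl (by omega)))
  rw [ftrlObjective] at hleader
  rw [sub_div] at hR₁
  linarith

end FTRL

section DiscountedMemory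

variable {W H : Type*} [NormedAddCommGroup W] [NormedSpace ℝ W] [NormedAddCommGroup H]
  [NormedSpace ℝ H] {A : H →L[ℝ] H} {B : W →L[ℝ] H} {ρ : ℝ} {coord : ℕ → H →ₗ[ℝ] W}

def constHistory (A : H →L[ℝ] H) (B : W →L[ℝ] H) (t : ℕ) (z : W) : H :=
  ∑ k ∈ range t, (A ^ k) (B z)

theorem constHistory_sub (t : ℕ) (a b : W) :
    constHistory A B t a - constHistory A B t b = constHistory A B t (a - b) := by
  simp only [constHistory, ← sum_sub_distrib, map_sub]

theorem history_eq_sum {x : ℕ → W} {h : ℕ → H} (h0 : h 0 = 0)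
    (hrec : ∀ t, h (t + 1) = A (h t) + B (x (t + 1))) (t : ℕ) :
    h t = ∑ k ∈ range t, (A ^ k) (B (x (t - k))) := by
  induction t with
  | zero => simpa using h0
  | succ t ih =>
    rw [hrec t, ih, sum_range_succ', map_sum]
    simp [pow_succ']

/-- `H` is the `ℓ²`-sum of copies of `W`, read through the coordinate maps `coord`; `A` is the
`ρ`-discounted shift and `B` the inclusion as coordinate `0`. -/
structure DiscountedMemory (A : H →L[ℝ] H) (B : W →L[ℝ] H) (ρ : ℝ) (coord : ℕ → H →ₗ[ℝ] W) :
    Prop where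
  norm_eq : ∀ y, ‖y‖ = √(∑' i, ‖coord i y‖ ^ 2)
  coord_zero_A : ∀ y, coord 0 (A y) = 0
  coord_succ_A : ∀ y i, coord (i + 1) (A y) = ρ • coord i y
  coord_zero_B : ∀ w, coord 0 (B w) = w
  coord_succ_B : ∀ w i, coord (i + 1) (B w) = 0

namespace DiscountedMemory

theorem coord_pow_apply (hM : DiscountedMemory A B ρ coord) (k : ℕ) (w : W) (i : ℕ) :
    coord i ((A ^ k) (B w)) = if i = k then ρ ^ k • w else 0 := by
  induction k generalizing i with
  | zero => cases i <;> simp [hM.coord_zero_B, hM.coord_succ_B]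
  | succ k ih =>
    rw [pow_succ']
    change coord i (A ((A ^ k) (B w))) = _
    cases i with
    | zero => simp [hM.coord_zero_A]
    | succ i =>
      rw [hM.coord_succ_A, ih]
      split_ifs <;> simp_all [smul_smul, pow_succ']

theorem norm_sum_pow_apply (hM : DiscountedMemory A B ρ coord) (t : ℕ) (g : ℕ → W) :
    ‖∑ k ∈ range t, (A ^ k) (B (g k))‖ = √(∑ i ∈ range t, (ρ ^ 2) ^ i * ‖g i‖ ^ 2) := by
  have hcoord (i : ℕ) : ‖coord i (∑ k ∈ range t, (A ^ k) (B (g k)))‖ ^ 2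
      = if i ∈ range t then (ρ ^ 2) ^ i * ‖g i‖ ^ 2 else 0 := by
    simp only [map_sum, hM.coord_pow_apply, sum_ite_eq]
    split_ifs
    · rw [norm_smul, norm_pow, Real.norm_eq_abs, mul_pow, ← pow_mul, mul_comm i 2, pow_mul,
        sq_abs]
    · simp
  rw [hM.norm_eq, tsum_eq_sum (s := range t) fun i hi => by rw [hcoord, if_neg hi]]
  exact congrArg _ (sum_congr rfl fun i hi => by rw [hcoord, if_pos hi])

theorem norm_constHistory_le (hM : DiscountedMemory A B ρ coord) (hρ : ρ ^ 2 < 1) (t : ℕ)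
    (w : W) : ‖constHistory A B t w‖ ≤ ‖w‖ * (1 - ρ ^ 2) ^ (-(1 : ℝ) / 2) := by
  have hu : 0 < 1 - ρ ^ 2 := by linarith
  have hsq : ((1 - ρ ^ 2) ^ (-(1 : ℝ) / 2)) ^ 2 = (1 - ρ ^ 2)⁻¹ := by
    simpa using sq_rpow_neg_div_two hu.le 1
  rw [constHistory, hM.norm_sum_pow_apply t fun _ => w, Real.sqrt_le_left (by positivity),
    mul_pow, hsq, ← sum_mul, mul_comm]
  gcongr
  simpa [← range_eq_Ico] using geom_sum_Ico_le_of_lt_one (m := 0) (n := t) (sq_nonneg ρ) hρ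

theorem norm_sum_pow_apply_le_of_norm_le (hM : DiscountedMemory A B ρ coord) (hρ : ρ ^ 2 < 1)
    {σ : ℝ} (hσ : 0 ≤ σ) {t : ℕ} {g : ℕ → W} (hg : ∀ i < t, ‖g i‖ ≤ i * σ) :
    ‖∑ k ∈ range t, (A ^ k) (B (g k))‖ ≤ σ * √2 * (1 - ρ ^ 2) ^ (-(3 : ℝ) / 2) := by
  have hu : 0 < 1 - ρ ^ 2 := by linarith
  have hsq : ((1 - ρ ^ 2) ^ (-(3 : ℝ) / 2)) ^ 2 = ((1 - ρ ^ 2) ^ 3)⁻¹ := by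
    simpa using sq_rpow_neg_div_two hu.le 3
  rw [hM.norm_sum_pow_apply, Real.sqrt_le_left (by positivity), mul_pow, mul_pow,
    Real.sq_sqrt zero_le_two, hsq]
  calc ∑ i ∈ range t, (ρ ^ 2) ^ i * ‖g i‖ ^ 2
      ≤ ∑ i ∈ range t, (ρ ^ 2) ^ i * (i * σ) ^ 2 := by
        gcongr with i hi
        exact hg i (mem_range.mp hi)
    _ = σ ^ 2 * ∑ i ∈ range t, (i : ℝ) ^ 2 * (ρ ^ 2) ^ i := by
        rw [mul_sum]
        exact sum_congr rfl fun i _ => by ring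
    _ ≤ σ ^ 2 * (2 / (1 - ρ ^ 2) ^ 3) := by
        gcongr
        exact sum_range_sq_mul_pow_le (sq_nonneg ρ) hρ t
    _ = σ ^ 2 * 2 * ((1 - ρ ^ 2) ^ 3)⁻¹ := by ring

theorem abs_sub_constHistory_le (hM : DiscountedMemory A B ρ coord) (hρ : ρ ^ 2 < 1)
    {F : H → ℝ} {L : ℝ} (hL : 0 ≤ L) (hF : ∀ a b, |F a - F b| ≤ L * ‖a - b‖) (t : ℕ) (a b : W) :
    |F (constHistory A B t a) - F (constHistory A B t b)|
      ≤ L * (1 - ρ ^ 2) ^ (-(1 : ℝ) / 2) * ‖a - b‖ := by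
  calc _ ≤ L * ‖constHistory A B t (a - b)‖ := by rw [← constHistory_sub]; exact hF _ _
    _ ≤ L * (‖a - b‖ * (1 - ρ ^ 2) ^ (-(1 : ℝ) / 2)) := by
        gcongr; exact hM.norm_constHistory_le hρ t _
    _ = _ := by ring

theorem norm_history_sub_constHistory_le (hM : DiscountedMemory A B ρ coord) (hρ : ρ ^ 2 < 1)
    {x : ℕ → W} {h : ℕ → H} (h0 : h 0 = 0) (hrec : ∀ t, h (t + 1) = A (h t) + B (x (t + 1)))
    {σ : ℝ} (hσ : 0 ≤ σ) {t : ℕ} (hstep : ∀ j, 1 ≤ j → j < t → ‖x j - x (j + 1)‖ ≤ σ) :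
    ‖h t - constHistory A B t (x t)‖ ≤ σ * √2 * (1 - ρ ^ 2) ^ (-(3 : ℝ) / 2) := by
  rw [history_eq_sum h0 hrec, constHistory, ← sum_sub_distrib]
  simp_rw [← map_sub]
  refine hM.norm_sum_pow_apply_le_of_norm_le hρ hσ fun i hi => ?_
  have h := norm_sub_le_mul_of_norm_sub_succ_le (x := x) (Nat.sub_le t i)
    fun j hj hjt => hstep j (by omega) hjt
  rwa [Nat.sub_sub_self hi.le] at h

theorem policy_regret_le (hM : DiscountedMemory A B ρ coord) (hρ : ρ ^ 2 < 1) {X : Set W}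
    {T : ℕ} {f : ℕ → H → ℝ} {L Lbar : ℝ} (hL : 0 ≤ L) (hLbar : 0 ≤ Lbar)
    (hLip : ∀ t, 1 ≤ t → t ≤ T → ∀ a b : H, |f t a - f t b| ≤ L * ‖a - b‖)
    (hconv : ∀ t, 1 ≤ t → t ≤ T → ConvexOn ℝ X fun z => f t (constHistory A B t z))
    (hLipBar : ∀ t, 1 ≤ t → t ≤ T → ∀ a ∈ X, ∀ b ∈ X,
      |f t (constHistory A B t a) - f t (constHistory A B t b)| ≤ Lbar * ‖a - b‖)
    {R : W → ℝ} {α D η : ℝ} (hα : 0 < α) (hR : StrongConvexOn X α R)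
    (hosc : ∀ a ∈ X, ∀ b ∈ X, |R a - R b| ≤ D) (hη : 0 < η) {x : ℕ → W}
    (hx : IsFTRLIterates X (fun t z => f t (constHistory A B t z)) R η T x) {h : ℕ → H}
    (h0 : h 0 = 0) (hrec : ∀ t, h (t + 1) = A (h t) + B (x (t + 1))) {y : W} (hy : y ∈ X) :
    ∑ t ∈ Icc 1 T, f t (h t) - ∑ t ∈ Icc 1 T, f t (constHistory A B t y)
      ≤ η * (5 * (T * L * Lbar / α * (1 - ρ ^ 2) ^ (-(3 : ℝ) / 2))) + D / η := by
  set c := (1 - ρ ^ 2) ^ (-(3 : ℝ) / 2)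
  have hu : 0 < 1 - ρ ^ 2 := by linarith
  have hc : (1 - ρ ^ 2) ^ (-(1 : ℝ) / 2) ≤ c :=
    Real.rpow_le_rpow_of_exponent_ge hu (by linarith [sq_nonneg ρ]) (by norm_num)
  -- Capping `Lbar` at `L * c` costs nothing, since the unary losses are `L * c`-Lipschitz anyway.
  set K := min Lbar (L * c)
  have hK : 0 ≤ K := le_min hLbar (by positivity)
  have hlipK : ∀ t, 1 ≤ t → t ≤ T → ∀ a ∈ X, ∀ b ∈ X,
      |f t (constHistory A B t a) - f t (constHistory A B t b)| ≤ K * ‖a - b‖ := by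
    intro t ht₁ ht a ha b hb
    obtain hKeq | hKeq : K = Lbar ∨ K = L * c := min_choice _ _ <;> rw [hKeq]
    · exact hLipBar t ht₁ ht a ha b hb
    · exact (hM.abs_sub_constHistory_le hρ hL (hLip t ht₁ ht) t a b).trans (by gcongr)
  have hmemory : ∀ t ∈ Icc 1 T, f t (h t) - f t (constHistory A B t (x t))
      ≤ L * (2 * η * K / α * √2 * c) := by
    intro t ht
    obtain ⟨ht₁, ht⟩ := mem_Icc.mp ht
    refine (le_abs_self _).trans <| (hLip t ht₁ ht _ _).trans ?_
    gcongr
    exact hM.norm_history_sub_constHistory_le hρ h0 hrec (by positivity)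
      fun j hj hjt => hx.norm_sub_succ_le hη hα hK hR hconv hlipK hj (by omega)
  have hmemory_sum := sum_le_card_nsmul _ _ _ hmemory
  rw [sum_sub_distrib, Nat.card_Icc, Nat.add_sub_cancel, nsmul_eq_mul] at hmemory_sum
  have hregret := hx.regret_le hη hα hK hR hconv hlipK hosc hy
  calc _ ≤ T * (L * (2 * η * K / α * √2 * c)) + (T * (K * (2 * η * K / α)) + D / η) := by
        linarith
    _ = 2 * η * T / α * (K * (√2 * (L * c) + K)) + D / η := by ring
    _ ≤ 2 * η * T / α * ((√2 + 1) * (Lbar * (L * c))) + D / η := by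
        gcongr 2 * η * T / α * ?_ + _
        exact min_mul_add_min_le hLbar (by positivity)
    _ = 2 * (√2 + 1) * (η * (T * L * Lbar / α * c)) + D / η := by ring
    _ ≤ 5 * (η * (T * L * Lbar / α * c)) + D / η := by
        gcongr
        linarith [Real.sqrt_two_lt_three_halves]
    _ = _ := by ring

end DiscountedMemory

end DiscountedMemory

/-- FTRL regret for OCO with ρ-discounted infinite memory, 2-norm. There are
absolute constants `C, C' > 0` such that for every ρ-discounted infinite memory instance
(encoded via coordinate maps `coord i : ℋ →ₗ[ℝ] 𝒲` with the `ℓ²` norm formula, the discounted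
shift `A` and inclusion `B`), `L`-Lipschitz losses whose unary forms are convex and
`L̄`-Lipschitz on `𝒳`, and an `α`-strongly convex regularizer with oscillation at most `D`,
there is a suitable step size `η > 0` such that the FTRL iterates have policy regret at most
`C √((D/α) T L L̄ (1−ρ²)^{−3/2})`; moreover, when `L̄ ≤ L (1−ρ²)^{−1/2}`, this bound is at most
`C' √((D/α) T L² (1−ρ)^{−2})`. -/
theorem stmt_8 : ∃ C > (0:ℝ), ∃ C' > (0:ℝ),
    ∀ (W : Type u) (H : Type v)
      [NormedAddCommGroup W] [InnerProductSpace ℝ W] [CompleteSpace W]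
      [NormedAddCommGroup H] [NormedSpace ℝ H] [CompleteSpace H]
      (X : Set W), X.Nonempty → IsClosed X → Convex ℝ X →
    ∀ (A : H →L[ℝ] H) (B : W →L[ℝ] H) (ρ : ℝ) (coord : ℕ → H →ₗ[ℝ] W),
      ρ ∈ Set.Ioo (0:ℝ) 1 →
      (∀ y : H, Summable fun i : ℕ => ‖coord i y‖ ^ 2) →
      (∀ y : H, ‖y‖ = Real.sqrt (∑' i : ℕ, ‖coord i y‖ ^ 2)) →
      (∀ y : H, coord 0 (A y) = 0) →
      (∀ (y : H) (i : ℕ), coord (i + 1) (A y) = ρ • coord i y) →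
      (∀ x : W, coord 0 (B x) = x) →
      (∀ (x : W) (i : ℕ), coord (i + 1) (B x) = 0) →
    ∀ (T : ℕ) (f : ℕ → H → ℝ) (L Lbar : ℝ), 1 ≤ T → 0 ≤ L → 0 < Lbar →
      (∀ t, 1 ≤ t → t ≤ T → ∀ a b : H, |f t a - f t b| ≤ L * ‖a - b‖) →
      (∀ t, 1 ≤ t → t ≤ T →
        ConvexOn ℝ X (fun x : W => f t (∑ k ∈ Finset.range t, (A ^ k) (B x)))) →
      (∀ t, 1 ≤ t → t ≤ T → ∀ a ∈ X, ∀ b ∈ X,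
        |f t (∑ k ∈ Finset.range t, (A ^ k) (B a))
            - f t (∑ k ∈ Finset.range t, (A ^ k) (B b))| ≤ Lbar * ‖a - b‖) →
    ∀ (R : W → ℝ) (α D : ℝ), 0 < α → StrongConvexOn X α R → 0 < D →
      (∀ a ∈ X, ∀ b ∈ X, |R a - R b| ≤ D) →
    ∃ η > (0:ℝ),
      ∀ x : ℕ → W,
        (∀ t, 1 ≤ t → t ≤ T + 1 → x t ∈ X ∧
          ∀ y ∈ X,
            (∑ s ∈ Finset.Icc 1 (t - 1), f s (∑ k ∈ Finset.range s, (A ^ k) (B (x t))))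
                + R (x t) / η
              ≤ (∑ s ∈ Finset.Icc 1 (t - 1), f s (∑ k ∈ Finset.range s, (A ^ k) (B y)))
                + R y / η) →
      ∀ h : ℕ → H, h 0 = 0 → (∀ t : ℕ, h (t + 1) = A (h t) + B (x (t + 1))) →
        (∀ y ∈ X,
          (∑ t ∈ Finset.Icc 1 T, f t (h t))
              - (∑ t ∈ Finset.Icc 1 T, f t (∑ k ∈ Finset.range t, (A ^ k) (B y)))
            ≤ C * Real.sqrt (D / α * T * L * Lbar * (1 - ρ ^ 2) ^ (-(3:ℝ)/2))) ∧
        (Lbar ≤ L * (1 - ρ ^ 2) ^ (-(1:ℝ)/2) →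
          C * Real.sqrt (D / α * T * L * Lbar * (1 - ρ ^ 2) ^ (-(3:ℝ)/2))
            ≤ C' * Real.sqrt (D / α * T * L ^ 2 * ((1 - ρ)⁻¹) ^ 2)) := by
  refine ⟨5, by norm_num, 5, by norm_num, ?_⟩
  intro W H _ _ _ _ _ _ X _ _ _ A B ρ coord hρ _ hnorm hA0 hAs hB0 hBs T f L Lbar _ hL hLbar hLip
    hconv hLipBar R α D hα hR hD hosc
  have hM : DiscountedMemory A B ρ coord := ⟨hnorm, hA0, hAs, hB0, hBs⟩
  have hρ₂ : ρ ^ 2 < 1 := by nlinarith [hρ.1, hρ.2]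
  have hsecond (hLbar' : Lbar ≤ L * (1 - ρ ^ 2) ^ (-(1 : ℝ) / 2)) :=
    mul_le_mul_of_nonneg_left (Real.sqrt_le_sqrt <| mul_mul_mul_rpow_le_mul_sq_mul_inv_sq
      (P := D / α * T) hρ.1.le hρ.2 (by positivity) hL hLbar') (by norm_num : (0 : ℝ) ≤ 5)
  set V := T * L * Lbar / α * (1 - ρ ^ 2) ^ (-(3 : ℝ) / 2)
  rcases hL.eq_or_lt with rfl | hL
  · refine ⟨1, one_pos, fun x _ h _ _ => ⟨fun y _ => ?_, hsecond⟩⟩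
    rw [← sum_sub_distrib]
    refine (sum_nonpos fun t ht => ?_).trans (by positivity)
    simpa using (le_abs_self _).trans (hLip t (mem_Icc.mp ht).1 (mem_Icc.mp ht).2 _ _)
  refine ⟨√(D / (5 * V)), by positivity, fun x hx h h0 hrec => ⟨fun y hy => ?_, hsecond⟩⟩
  have hftrl : IsFTRLIterates X (fun t z => f t (constHistory A B t z)) R √(D / (5 * V)) T x :=
    fun n hn => ⟨(hx (n + 1) (by omega) (by omega)).1,
      isMinOn_iff.mpr (hx (n + 1) (by omega) (by omega)).2⟩
  calc _ ≤ √(D / (5 * V)) * (5 * V) + D / √(D / (5 * V)) :=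
        hM.policy_regret_le hρ₂ hL.le hLbar.le hLip hconv hLipBar hα hR hosc (by positivity)
          hftrl h0 hrec hy
    _ = 2 * √5 * √(D * V) := by
        rw [sqrt_div_mul_add_div_sqrt_div hD (by positivity), mul_left_comm,
          Real.sqrt_mul (by norm_num)]
        ring
    _ ≤ 5 * √(D / α * T * L * Lbar * (1 - ρ ^ 2) ^ (-(3 : ℝ) / 2)) := by
        rw [show D * V = D / α * T * L * Lbar * (1 - ρ ^ 2) ^ (-(3 : ℝ) / 2) by ring]
        gcongr
        nlinarith [Real.sq_sqrt (show (0 : ℝ) ≤ 5 by norm_num), Real.sqrt_nonneg 5]
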